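/- (Lemma 6) Define u_k(x) := x·f_q'(h_k(x))/β for k ≥ 0. Then for each fixed integer n ≥ 1, as θ ↑ 0 (θ real and negative, so that e^θ ∈ (0,1)), ln ∏_{k=0}^{n−1} u_k(e^θ) is asymptotically equivalent to −(1 − u(e^θ)/β)·n − γ_q·θ·∑_{k=0}^{n−1} u(e^θ)^k, i.e. the ratio of the two expressions tends to 1 as θ ↑ 0. -/

import Mathlib

/-!
Both the numerator `log ∏_{k<n} u_k(e^θ)` and the denominator vanish at `θ = 0`, and both have
the left derivative `n + γ_q (n - ∑_{k<n} β^k) ≥ n` there, so their ratio tends to `1`.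
The derivatives come from left derivatives at `x = 1`: a power series with nonnegative
coefficients has there the slope given by its differentiated series (write
`(f(1) - f(s)) / (1 - s)` termwise and use uniform convergence), so `f_q` has slope `β` and
`f_q'` slope `b_q`; by induction `h_k` has slope `∑_{j<k} β^j`, and the fixed-point equation
`h = x f_q(h)`, rewritten as `(1 - h(x)) (1 - x G(h(x))) = 1 - x` with `G` the difference
quotient of `f_q`, gives `h` the slope `1 / (1 - β)`.
-/

open Filter Topology Set

noncomputable def genFun (a : ℕ → ℝ) (s : ℝ) : ℝ := ∑' k, a k * s ^ k

def derivCoeff (a : ℕ → ℝ) (k : ℕ) : ℝ := (k + 1) * a (k + 1)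

/-- `(genFun a 1 - genFun a s) / (1 - s)`, expanded termwise. -/
noncomputable def slopeAtOne (a : ℕ → ℝ) (s : ℝ) : ℝ :=
  ∑' k, a k * ∑ i ∈ Finset.range k, s ^ i

section PowerSeries

variable {a : ℕ → ℝ} {s : ℝ}

lemma derivCoeff_nonneg (hnn : ∀ k, 0 ≤ a k) (k : ℕ) : 0 ≤ derivCoeff a k :=
  mul_nonneg (by positivity) (hnn _)

lemma derivCoeff_derivCoeff (a : ℕ → ℝ) (k : ℕ) :
    derivCoeff (derivCoeff a) k = ((k : ℝ) + 2) * ((k : ℝ) + 1) * a (k + 2) := by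
  simp only [derivCoeff]; push_cast; ring

lemma summable_natCast_mul_iff :
    Summable (fun k : ℕ => (k : ℝ) * a k) ↔ Summable (derivCoeff a) := by
  rw [← summable_nat_add_iff 1]; push_cast; rfl

lemma tsum_natCast_mul_eq (h : Summable fun k : ℕ => (k : ℝ) * a k) :
    ∑' k : ℕ, (k : ℝ) * a k = genFun (derivCoeff a) 1 := by
  simp [h.tsum_eq_zero_add, genFun, derivCoeff]

lemma Summable.of_derivCoeff (hnn : ∀ k, 0 ≤ a k) (h : Summable (derivCoeff a)) :
    Summable a := by
  rw [← summable_nat_add_iff 1]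
  exact h.of_nonneg_of_le (fun k => hnn _)
    fun k => le_mul_of_one_le_left (hnn _) (by simp)

lemma genFun_one : genFun a 1 = ∑' k, a k := by simp [genFun]

lemma genFun_nonneg (hnn : ∀ k, 0 ≤ a k) (hs : 0 ≤ s) : 0 ≤ genFun a s :=
  tsum_nonneg fun k => mul_nonneg (hnn k) (pow_nonneg hs k)

lemma summable_mul_pow (ha : Summable a) (hnn : ∀ k, 0 ≤ a k) (hs : s ∈ Icc (0 : ℝ) 1) :
    Summable fun k => a k * s ^ k :=
  ha.of_nonneg_of_le (fun k => mul_nonneg (hnn k) (pow_nonneg hs.1 k))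
    fun k => mul_le_of_le_one_right (hnn k) (pow_le_one₀ hs.1 hs.2)

lemma genFun_mapsTo_Icc (hnn : ∀ k, 0 ≤ a k) (ha : Summable a) (hsum : ∑' k, a k = 1) :
    MapsTo (genFun a) (Icc 0 1) (Icc 0 1) := fun _ hs =>
  ⟨genFun_nonneg hnn hs.1, hsum ▸ (summable_mul_pow ha hnn hs).tsum_le_tsum
    (fun k => mul_le_of_le_one_right (hnn k) (pow_le_one₀ hs.1 hs.2)) ha⟩

lemma mul_geom_sum_nonneg (hnn : ∀ k, 0 ≤ a k) (hs : s ∈ Icc (0 : ℝ) 1) (k : ℕ) :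
    0 ≤ a k * ∑ i ∈ Finset.range k, s ^ i :=
  mul_nonneg (hnn k) (Finset.sum_nonneg fun i _ => pow_nonneg hs.1 i)

lemma mul_geom_sum_le (hnn : ∀ k, 0 ≤ a k) (hs : s ∈ Icc (0 : ℝ) 1) (k : ℕ) :
    a k * ∑ i ∈ Finset.range k, s ^ i ≤ k * a k := by
  rw [mul_comm (k : ℝ)]
  refine mul_le_mul_of_nonneg_left ?_ (hnn k)
  calc ∑ i ∈ Finset.range k, s ^ i ≤ ∑ _i ∈ Finset.range k, (1 : ℝ) :=
        Finset.sum_le_sum fun i _ => pow_le_one₀ hs.1 hs.2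
    _ = k := by simp

lemma slopeAtOne_mem_Icc (hnn : ∀ k, 0 ≤ a k) (hka : Summable fun k : ℕ => (k : ℝ) * a k)
    (hs : s ∈ Icc (0 : ℝ) 1) : slopeAtOne a s ∈ Icc 0 (∑' k : ℕ, (k : ℝ) * a k) :=
  ⟨tsum_nonneg (mul_geom_sum_nonneg hnn hs),
    (hka.of_nonneg_of_le (mul_geom_sum_nonneg hnn hs) (mul_geom_sum_le hnn hs)).tsum_le_tsum
      (mul_geom_sum_le hnn hs) hka⟩

lemma continuousOn_slopeAtOne (hnn : ∀ k, 0 ≤ a k)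
    (hka : Summable fun k : ℕ => (k : ℝ) * a k) :
    ContinuousOn (slopeAtOne a) (Icc 0 1) :=
  continuousOn_tsum (fun k => by fun_prop) hka fun k s hs => by
    rw [Real.norm_of_nonneg (mul_geom_sum_nonneg hnn hs k)]
    exact mul_geom_sum_le hnn hs k

lemma slopeAtOne_one : slopeAtOne a 1 = ∑' k : ℕ, (k : ℝ) * a k := by
  simp [slopeAtOne, mul_comm]

lemma tendsto_slopeAtOne (hnn : ∀ k, 0 ≤ a k) (hka : Summable fun k : ℕ => (k : ℝ) * a k) :
    Tendsto (slopeAtOne a) (𝓝[Icc 0 1] 1) (𝓝 (∑' k : ℕ, (k : ℝ) * a k)) :=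
  slopeAtOne_one (a := a) ▸ continuousOn_slopeAtOne hnn hka 1 ⟨zero_le_one, le_rfl⟩

lemma tsum_sub_genFun (ha : Summable a) (hnn : ∀ k, 0 ≤ a k) (hs : s ∈ Icc (0 : ℝ) 1) :
    ∑' k, a k - genFun a s = (1 - s) * slopeAtOne a s := by
  rw [slopeAtOne, ← tsum_mul_left, genFun, ← ha.tsum_sub (summable_mul_pow ha hnn hs)]
  exact tsum_congr fun k => by linear_combination a k * geom_sum_mul s k

theorem hasDerivWithinAt_genFun_one (hnn : ∀ k, 0 ≤ a k) (h : Summable (derivCoeff a)) :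
    HasDerivWithinAt (genFun a) (genFun (derivCoeff a) 1) (Icc 0 1) 1 := by
  have hka := summable_natCast_mul_iff.2 h
  have ha := h.of_derivCoeff hnn
  rw [hasDerivWithinAt_iff_tendsto_slope, ← tsum_natCast_mul_eq hka]
  refine ((tendsto_slopeAtOne hnn hka).mono_left (nhdsWithin_mono _ sdiff_subset)).congr' ?_
  filter_upwards [self_mem_nhdsWithin] with s ⟨hs, hs1⟩
  have hs1 : s - 1 ≠ 0 := sub_ne_zero.2 hs1
  rw [slope_def_field, genFun_one, eq_div_iff hs1]
  linear_combination tsum_sub_genFun ha hnn hs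

end PowerSeries

section FixedPoint

variable {f G h : ℝ → ℝ} {β : ℝ}

lemma one_sub_mul_one_sub_mul_eq (hfG : ∀ s ∈ Icc (0 : ℝ) 1, 1 - f s = (1 - s) * G s)
    (hh : MapsTo h (Icc 0 1) (Icc 0 1)) (hfix : ∀ x ∈ Icc (0 : ℝ) 1, h x = x * f (h x))
    {x : ℝ} (hx : x ∈ Icc (0 : ℝ) 1) : (1 - h x) * (1 - x * G (h x)) = 1 - x := by
  linear_combination x * hfG (h x) (hh hx) - hfix x hx

lemma one_sub_le_one_sub_mul (hG : ∀ s ∈ Icc (0 : ℝ) 1, G s ∈ Icc 0 β)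
    (hh : MapsTo h (Icc 0 1) (Icc 0 1)) {x : ℝ} (hx : x ∈ Icc (0 : ℝ) 1) :
    1 - β ≤ 1 - x * G (h x) := by
  have hGx := hG (h x) (hh hx)
  linarith [mul_le_of_le_one_left hGx.1 hx.2, hGx.2]

lemma continuousWithinAt_one_of_eq_mul_comp (hβ : β < 1)
    (hfG : ∀ s ∈ Icc (0 : ℝ) 1, 1 - f s = (1 - s) * G s)
    (hG : ∀ s ∈ Icc (0 : ℝ) 1, G s ∈ Icc 0 β)
    (hh : MapsTo h (Icc 0 1) (Icc 0 1)) (hfix : ∀ x ∈ Icc (0 : ℝ) 1, h x = x * f (h x))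
    (hh1 : h 1 = 1) : ContinuousWithinAt h (Icc 0 1) 1 := by
  have hlower : Tendsto (fun x => 1 - (1 - x) / (1 - β)) (𝓝[Icc 0 1] 1) (𝓝 1) :=
    tendsto_nhdsWithin_of_tendsto_nhds <|
      (continuous_const.sub ((continuous_const.sub continuous_id).div_const _)).tendsto' 1 1
        (by simp)
  rw [ContinuousWithinAt, hh1]
  refine tendsto_of_tendsto_of_tendsto_of_le_of_le' hlower tendsto_const_nhds ?_ ?_
  all_goals filter_upwards [self_mem_nhdsWithin] with x hx
  · have key := one_sub_mul_one_sub_mul_eq hfG hh hfix hx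
    have hpos := one_sub_le_one_sub_mul hG hh hx
    rw [sub_le_comm, le_div_iff₀ (sub_pos.2 hβ), ← key]
    exact mul_le_mul_of_nonneg_left hpos (sub_nonneg.2 (hh hx).2)
  · exact (hh hx).2

theorem hasDerivWithinAt_one_of_eq_mul_comp (hβ : β < 1)
    (hfG : ∀ s ∈ Icc (0 : ℝ) 1, 1 - f s = (1 - s) * G s)
    (hG : ∀ s ∈ Icc (0 : ℝ) 1, G s ∈ Icc 0 β)
    (hGβ : Tendsto G (𝓝[Icc 0 1] 1) (𝓝 β))
    (hh : MapsTo h (Icc 0 1) (Icc 0 1)) (hfix : ∀ x ∈ Icc (0 : ℝ) 1, h x = x * f (h x))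
    (hh1 : h 1 = 1) : HasDerivWithinAt h (1 - β)⁻¹ (Icc 0 1) 1 := by
  have hhc : Tendsto h (𝓝[Icc 0 1] 1) (𝓝[Icc 0 1] 1) := by
    simpa [hh1] using
      (continuousWithinAt_one_of_eq_mul_comp hβ hfG hG hh hfix hh1).tendsto_nhdsWithin hh
  have hlim : Tendsto (fun x => (1 - x * G (h x))⁻¹) (𝓝[Icc 0 1] 1) (𝓝 (1 - β)⁻¹) := by
    have hx : Tendsto (fun x : ℝ => x) (𝓝[Icc 0 1] 1) (𝓝 1) :=
      tendsto_nhdsWithin_of_tendsto_nhds tendsto_id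
    simpa using (tendsto_const_nhds.sub (hx.mul (hGβ.comp hhc))).inv₀
      (by rw [one_mul]; exact sub_ne_zero.2 hβ.ne')
  rw [hasDerivWithinAt_iff_tendsto_slope]
  refine (hlim.mono_left (nhdsWithin_mono _ sdiff_subset)).congr' ?_
  filter_upwards [self_mem_nhdsWithin] with x ⟨hx, hx1⟩
  have hpos := (sub_pos.2 hβ).trans_le (one_sub_le_one_sub_mul hG hh hx)
  rw [slope_def_field, hh1, eq_div_iff (sub_ne_zero.2 hx1), inv_mul_eq_div, div_eq_iff hpos.ne']
  linear_combination one_sub_mul_one_sub_mul_eq hfG hh hfix hx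

end FixedPoint

theorem hasDerivWithinAt_one_of_eq_mul_genFun {π : ℕ → ℝ} {h : ℝ → ℝ} (hnn : ∀ k, 0 ≤ π k)
    (hsum : ∑' k, π k = 1) (hs : Summable (derivCoeff π)) (hβ : genFun (derivCoeff π) 1 < 1)
    (hh : MapsTo h (Icc 0 1) (Icc 0 1)) (hfix : ∀ x ∈ Icc (0 : ℝ) 1, h x = x * genFun π (h x))
    (hh1 : h 1 = 1) : HasDerivWithinAt h (1 - genFun (derivCoeff π) 1)⁻¹ (Icc 0 1) 1 := by
  have hka := summable_natCast_mul_iff.2 hs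
  rw [← tsum_natCast_mul_eq hka] at hβ ⊢
  refine hasDerivWithinAt_one_of_eq_mul_comp hβ (fun s hs' => ?_)
    (fun s hs' => slopeAtOne_mem_Icc hnn hka hs') (tendsto_slopeAtOne hnn hka) hh hfix hh1
  rw [← tsum_sub_genFun (hs.of_derivCoeff hnn) hnn hs', hsum]

section Iterates

variable {f : ℝ → ℝ} {H : ℕ → ℝ → ℝ} {β : ℝ}

lemma iterate_mapsTo_Icc (hf : MapsTo f (Icc 0 1) (Icc 0 1)) (hH0 : ∀ x, H 0 x = 1)
    (hHrec : ∀ k x, H (k + 1) x = x * f (H k x)) (k : ℕ) :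
    MapsTo (H k) (Icc 0 1) (Icc 0 1) := by
  induction k with
  | zero => intro x _; simp [hH0]
  | succ k ih =>
    intro x hx
    have hfx := hf (ih hx)
    rw [hHrec]
    exact ⟨mul_nonneg hx.1 hfx.1, mul_le_one₀ hx.2 hfx.1 hfx.2⟩

lemma iterate_apply_one (hf1 : f 1 = 1) (hH0 : ∀ x, H 0 x = 1)
    (hHrec : ∀ k x, H (k + 1) x = x * f (H k x)) (k : ℕ) : H k 1 = 1 := by
  induction k with
  | zero => exact hH0 1
  | succ k ih => rw [hHrec, ih, hf1, one_mul]

theorem hasDerivWithinAt_iterate (hf : MapsTo f (Icc 0 1) (Icc 0 1)) (hf1 : f 1 = 1)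
    (hfd : HasDerivWithinAt f β (Icc 0 1) 1) (hH0 : ∀ x, H 0 x = 1)
    (hHrec : ∀ k x, H (k + 1) x = x * f (H k x)) (k : ℕ) :
    HasDerivWithinAt (H k) (∑ j ∈ Finset.range k, β ^ j) (Icc 0 1) 1 := by
  induction k with
  | zero => simpa [funext hH0] using hasDerivWithinAt_const (1 : ℝ) (Icc (0 : ℝ) 1) (1 : ℝ)
  | succ k ih =>
    have hcomp := hfd.comp_of_eq 1 ih (iterate_mapsTo_Icc hf hH0 hHrec k)
      (iterate_apply_one hf1 hH0 hHrec k).symm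
    rw [show H (k + 1) = fun x => x * f (H k x) from funext (hHrec k)]
    refine ((hasDerivWithinAt_id 1 _).mul hcomp).congr_deriv ?_
    simp [geom_sum_succ, iterate_apply_one hf1 hH0 hHrec k, hf1, add_comm]

end Iterates

lemma HasDerivWithinAt.id_mul_comp_one {f g : ℝ → ℝ} {b d : ℝ}
    (hf : HasDerivWithinAt f b (Icc 0 1) 1) (hg : HasDerivWithinAt g d (Icc 0 1) 1)
    (hgI : MapsTo g (Icc 0 1) (Icc 0 1)) (hg1 : g 1 = 1) :
    HasDerivWithinAt (fun x => x * f (g x)) (f 1 + b * d) (Icc 0 1) 1 := by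
  refine ((hasDerivWithinAt_id 1 _).mul (hf.comp_of_eq 1 hg hgI hg1.symm)).congr_deriv ?_
  simp [hg1]

lemma sum_range_geom_sum_mul_one_sub {R : Type*} [CommRing R] (x : R) (n : ℕ) :
    (∑ k ∈ Finset.range n, ∑ j ∈ Finset.range k, x ^ j) * (1 - x)
      = n - ∑ k ∈ Finset.range n, x ^ k := by
  rw [Finset.sum_mul]
  simp_rw [geom_sum_mul_neg]
  simp [Finset.sum_sub_distrib]

lemma HasDerivWithinAt.comp_exp_Iic {g : ℝ → ℝ} {g' : ℝ}
    (hg : HasDerivWithinAt g g' (Icc 0 1) 1) :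
    HasDerivWithinAt (fun θ => g (Real.exp θ)) g' (Iic 0) 0 := by
  have hexp : MapsTo Real.exp (Iic 0) (Icc 0 1) := fun θ hθ =>
    ⟨(Real.exp_pos θ).le, Real.exp_le_one_iff.2 hθ⟩
  simpa [Function.comp_def] using
    hg.comp_of_eq 0 (Real.hasDerivAt_exp 0).hasDerivWithinAt hexp Real.exp_zero.symm

lemma HasDerivWithinAt.log_prod {ι : Type*} {s : Finset ι} {g : ι → ℝ → ℝ} {g' : ι → ℝ}
    {t : Set ℝ} {x : ℝ} (hg : ∀ i ∈ s, HasDerivWithinAt (g i) (g' i) t x)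
    (hg1 : ∀ i ∈ s, g i x = 1) :
    HasDerivWithinAt (fun y => Real.log (∏ i ∈ s, g i y)) (∑ i ∈ s, g' i) t x := by
  classical
  have hprod : ∏ i ∈ s, g i x = 1 := Finset.prod_eq_one hg1
  refine ((HasDerivWithinAt.fun_finsetProd hg).log (by simp [hprod])).congr_deriv ?_
  rw [hprod, div_one]
  refine Finset.sum_congr rfl fun i _ => ?_
  rw [Finset.prod_eq_one fun j hj => hg1 j (Finset.mem_of_mem_erase hj), one_smul]

lemma tendsto_div_of_hasDerivWithinAt {f g : ℝ → ℝ} {f' g' x : ℝ} {s : Set ℝ}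
    (hf : HasDerivWithinAt f f' s x) (hg : HasDerivWithinAt g g' s x) (hfx : f x = 0)
    (hgx : g x = 0) (hg' : g' ≠ 0) :
    Tendsto (fun y => f y / g y) (𝓝[s \ {x}] x) (𝓝 (f' / g')) := by
  refine ((hasDerivWithinAt_iff_tendsto_slope.1 hf).div
    (hasDerivWithinAt_iff_tendsto_slope.1 hg) hg').congr' ?_
  filter_upwards [self_mem_nhdsWithin] with y ⟨_, hy⟩
  simp only [Pi.div_apply, slope_def_field, hfx, hgx, sub_zero]
  exact div_div_div_cancel_right₀ (sub_ne_zero.2 hy) _ _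

theorem tendsto_log_prod_div {u : ℝ → ℝ} {uk : ℕ → ℝ → ℝ} {β b : ℝ} (hβ0 : 0 < β)
    (hβ1 : β < 1) (hb : 0 ≤ b) (hu : HasDerivWithinAt u (β + b * (1 - β)⁻¹) (Icc 0 1) 1)
    (hu1 : u 1 = β)
    (huk : ∀ k,
      HasDerivWithinAt (uk k) ((β + b * ∑ j ∈ Finset.range k, β ^ j) / β) (Icc 0 1) 1)
    (huk1 : ∀ k, uk k 1 = 1) {n : ℕ} (hn : 1 ≤ n) :
    Tendsto (fun θ => Real.log (∏ k ∈ Finset.range n, uk k (Real.exp θ)) /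
        (-(1 - u (Real.exp θ) / β) * n
          - b / (β * (1 - β)) * θ * ∑ k ∈ Finset.range n, u (Real.exp θ) ^ k))
      (𝓝[<] 0) (𝓝 1) := by
  set d : ℕ → ℝ := fun k => ∑ j ∈ Finset.range k, β ^ j
  set c := ∑ k ∈ Finset.range n, (β + b * d k) / β
  have hc_pos : 0 < c := by
    have hd : ∀ k, 0 ≤ d k := fun k => Finset.sum_nonneg fun j _ => pow_nonneg hβ0.le j
    refine lt_of_lt_of_le (by exact_mod_cast hn) (?_ : (n : ℝ) ≤ c)
    calc (n : ℝ) = ∑ _k ∈ Finset.range n, (1 : ℝ) := by simp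
      _ ≤ c := Finset.sum_le_sum fun k _ => by
        rw [le_div_iff₀ hβ0]; nlinarith [mul_nonneg hb (hd k)]
  have hc : c = n + b / (β * (1 - β)) * (n - d n) := by
    have hβ1' : 1 - β ≠ 0 := sub_ne_zero.2 hβ1.ne'
    rw [← sum_range_geom_sum_mul_one_sub]
    simp only [c, ← Finset.sum_div, Finset.sum_add_distrib, ← Finset.mul_sum, Finset.sum_const,
      Finset.card_range, nsmul_eq_mul]
    field_simp
    rfl
  have hN : HasDerivWithinAt (fun θ => Real.log (∏ k ∈ Finset.range n, uk k (Real.exp θ))) c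
      (Iic 0) 0 :=
    HasDerivWithinAt.log_prod (fun k _ => (huk k).comp_exp_Iic) (fun k _ => by simp [huk1])
  have hU := hu.comp_exp_Iic
  have hD : HasDerivWithinAt (fun θ => -(1 - u (Real.exp θ) / β) * n
      - b / (β * (1 - β)) * θ * ∑ k ∈ Finset.range n, u (Real.exp θ) ^ k) c (Iic 0) 0 := by
    refine ((((hU.div_const β).const_sub 1).neg.mul_const (n : ℝ)).sub
      (((hasDerivWithinAt_id (0 : ℝ) (Iic 0)).const_mul (b / (β * (1 - β)))).mul
        (HasDerivWithinAt.fun_sum fun k _ => hU.fun_pow k))).congr_deriv ?_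
    simp only [neg_neg, mul_one, Real.exp_zero, hu1, id_eq, mul_zero, zero_mul, add_zero, hc, d]
    field_simp
    ring
  simpa [Iic_sdiff_right, div_self hc_pos.ne'] using
    tendsto_div_of_hasDerivWithinAt hN hD (by simp [huk1]) (by simp [hu1, hβ0.ne']) hc_pos.ne'

theorem log_prod_uk_asymptotics_general
    (π : ℕ → ℝ) (hπ_nn : ∀ k, 0 ≤ π k) (hπ_sum : ∑' k, π k = 1)
    (fq fq' fq'' : ℝ → ℝ)
    (hfq : ∀ s, fq s = ∑' k, π k * s ^ k)
    (hfq' : ∀ s, fq' s = ∑' k : ℕ, ((k : ℝ) + 1) * π (k + 1) * s ^ k)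
    (hfq'' : ∀ s, fq'' s = ∑' k : ℕ, ((k : ℝ) + 2) * ((k : ℝ) + 1) * π (k + 2) * s ^ k)
    (β : ℝ) (hβ : β = fq' 1) (hβ_pos : 0 < β) (hβ_lt : β < 1)
    (bq : ℝ) (hbq : bq = fq'' 1)
    (hbq_fin : Summable fun k : ℕ => ((k : ℝ) + 2) * ((k : ℝ) + 1) * π (k + 2))
    (γq : ℝ) (hγq : γq = bq / (β * (1 - β)))
    (H : ℕ → ℝ → ℝ → ℝ)
    (hH0 : ∀ s x : ℝ, H 0 s x = s)
    (hHrec : ∀ (n : ℕ) (s x : ℝ), H (n + 1) s x = x * fq (H n s x))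
    (h : ℝ → ℝ)
    (hh_lim : ∀ x ∈ Set.Icc (0 : ℝ) 1, Tendsto (fun n => H n 1 x) atTop (𝓝 (h x)))
    (hh_fix : ∀ x ∈ Set.Icc (0 : ℝ) 1, h x = x * fq (h x))
    (hh_one : h 1 = 1)
    (u : ℝ → ℝ) (hu : ∀ x, u x = x * fq' (h x))
    (uk : ℕ → ℝ → ℝ) (huk : ∀ (k : ℕ) (x : ℝ), uk k x = x * fq' (H k 1 x) / β) :
    ∀ n : ℕ, 1 ≤ n →
      Tendsto (fun θ =>
          Real.log (∏ k ∈ Finset.range n, uk k (Real.exp θ)) /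
            (-(1 - u (Real.exp θ) / β) * n
              - γq * θ * ∑ k ∈ Finset.range n, u (Real.exp θ) ^ k))
        (𝓝[<] 0) (𝓝 1) := by
  intro n hn
  obtain rfl : fq = genFun π := funext hfq
  obtain rfl : fq' = genFun (derivCoeff π) := funext hfq'
  obtain rfl : bq = genFun (derivCoeff (derivCoeff π)) 1 := by
    simp only [hbq, hfq'', genFun, derivCoeff_derivCoeff]
  subst hβ hγq
  have hs2 : Summable (derivCoeff (derivCoeff π)) := by
    rw [funext (derivCoeff_derivCoeff π)]; exact hbq_fin
  have hs1 : Summable (derivCoeff π) := hs2.of_derivCoeff (derivCoeff_nonneg hπ_nn)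
  have hf := genFun_mapsTo_Icc hπ_nn (hs1.of_derivCoeff hπ_nn) hπ_sum
  have hf1 : genFun π 1 = 1 := genFun_one.trans hπ_sum
  have hHI := iterate_mapsTo_Icc (H := fun k => H k 1) hf (hH0 1) (hHrec · 1)
  have hH1 := iterate_apply_one (H := fun k => H k 1) hf1 (hH0 1) (hHrec · 1)
  have DH := hasDerivWithinAt_iterate (H := fun k => H k 1) hf hf1
    (hasDerivWithinAt_genFun_one hπ_nn hs1) (hH0 1) (hHrec · 1)
  have hh : MapsTo h (Icc 0 1) (Icc 0 1) := fun x hx =>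
    isClosed_Icc.mem_of_tendsto (hh_lim x hx) (.of_forall fun k => hHI k hx)
  have Dh := hasDerivWithinAt_one_of_eq_mul_genFun hπ_nn hπ_sum hs1 hβ_lt hh hh_fix hh_one
  have Dfq' := hasDerivWithinAt_genFun_one (derivCoeff_nonneg hπ_nn) hs2
  refine tendsto_log_prod_div hβ_pos hβ_lt
    (genFun_nonneg (derivCoeff_nonneg (derivCoeff_nonneg hπ_nn)) zero_le_one)
    ((Dfq'.id_mul_comp_one Dh hh hh_one).congr (fun x _ => hu x) (hu 1)) (by simp [hu, hh_one])
    (fun k => ((Dfq'.id_mul_comp_one (DH k) (hHI k) (hH1 k)).div_const _).congr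
      (fun x _ => huk k x) (huk k 1)) (fun k => by simp [huk, hH1 k, hβ_pos.ne']) hn

theorem log_prod_uk_asymptotics
    (π : ℕ → ℝ) (hπ_nn : ∀ k, 0 ≤ π k) (hπ_sum : ∑' k, π k = 1)
    (hπ0 : 0 < π 0) (hπ01 : π 0 + π 1 < 1)
    (fq fq' fq'' : ℝ → ℝ)
    (hfq : ∀ s, fq s = ∑' k, π k * s ^ k)
    (hfq' : ∀ s, fq' s = ∑' k : ℕ, ((k : ℝ) + 1) * π (k + 1) * s ^ k)
    (hfq'' : ∀ s, fq'' s = ∑' k : ℕ, ((k : ℝ) + 2) * ((k : ℝ) + 1) * π (k + 2) * s ^ k)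
    (β : ℝ) (hβ : β = fq' 1) (hβ_pos : 0 < β) (hβ_lt : β < 1)
    (bq : ℝ) (hbq : bq = fq'' 1)
    (hbq_fin : Summable fun k : ℕ => ((k : ℝ) + 2) * ((k : ℝ) + 1) * π (k + 2))
    (γq : ℝ) (hγq : γq = bq / (β * (1 - β)))
    (H : ℕ → ℝ → ℝ → ℝ)
    (hH0 : ∀ s x : ℝ, H 0 s x = s)
    (hHrec : ∀ (n : ℕ) (s x : ℝ), H (n + 1) s x = x * fq (H n s x))
    (h : ℝ → ℝ)
    (hh_lim : ∀ x ∈ Set.Icc (0 : ℝ) 1, Tendsto (fun n => H n 1 x) atTop (𝓝 (h x)))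
    (hh_fix : ∀ x ∈ Set.Icc (0 : ℝ) 1, h x = x * fq (h x))
    (hh_one : h 1 = 1)
    (u : ℝ → ℝ) (hu : ∀ x, u x = x * fq' (h x))
    (uk : ℕ → ℝ → ℝ) (huk : ∀ (k : ℕ) (x : ℝ), uk k x = x * fq' (H k 1 x) / β) :
    ∀ n : ℕ, 1 ≤ n →
      Tendsto (fun θ =>
          Real.log (∏ k ∈ Finset.range n, uk k (Real.exp θ)) /
            (-(1 - u (Real.exp θ) / β) * n
              - γq * θ * ∑ k ∈ Finset.range n, u (Real.exp θ) ^ k))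
        (𝓝[<] 0) (𝓝 1) :=
  log_prod_uk_asymptotics_general π hπ_nn hπ_sum fq fq' fq'' hfq hfq' hfq'' β hβ hβ_pos hβ_lt bq hbq
    hbq_fin γq hγq H hH0 hHrec h hh_lim hh_fix hh_one u hu uk huk
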